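/- Let q ≥ 2, α ≤ q+3, and let f : (r₁,∞) × ℝ → ℝ be smooth with ∫∫ r^α |f|^{q−2} |∇f|² dr dz + ∫∫ r^{q+1} |f|^q dr dz < ∞ over D₁ = {(r,z) : r > r₁}. Then there exists a sequence r_n → ∞ such that r_n^{(α+q+3)/(2q)} · sup_{z ∈ ℝ} |f(r_n, z)| → 0 as n → ∞. -/

import Mathlib

open MeasureTheory Filter

noncomputable def pdr (F : ℝ × ℝ → ℝ) (p : ℝ × ℝ) : ℝ := deriv (fun t => F (t, p.2)) p.1
noncomputable def pdz (F : ℝ × ℝ → ℝ) (p : ℝ × ℝ) : ℝ := deriv (fun t => F (p.1, t)) p.2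

open Set

noncomputable def Fd (f : ℝ × ℝ → ℝ) (q α : ℝ) (p : ℝ × ℝ) : ℝ :=
  p.1 ^ (q+1) * |f p| ^ q + p.1 ^ α * |f p| ^ (q-2) * ((pdr f p) ^ 2 + (pdz f p) ^ 2)

lemma sq_rpow_half (x q : ℝ) : ((x^2 : ℝ)) ^ (q/2) = |x| ^ q := by
  rw [← sq_abs, ← Real.rpow_natCast |x| 2, ← Real.rpow_mul (abs_nonneg x)]
  congr 1; push_cast; ring

lemma rpow_half_sq (x p : ℝ) (hx : 0 ≤ x) : (x ^ (p/2))^2 = x ^ p := by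
  rw [← Real.rpow_natCast (x ^ (p/2)) 2, ← Real.rpow_mul hx]
  congr 1; push_cast; ring

lemma ptwise_bound (q α r u v w : ℝ) (hq : 2 ≤ q) (hr : 0 < r) :
    |q * |u| ^ (q-2) * u * v| ≤
      (q/2) * r ^ (-((α+q+1)/2)) *
        |r^(q+1) * |u|^q + r^α * |u|^(q-2) * (w^2 + v^2)| := by
  set F : ℝ := r^(q+1) * |u|^q + r^α * |u|^(q-2) * (w^2 + v^2) with hF
  set a : ℝ := r^((q+1)/2) * |u|^(q/2) with ha
  set b : ℝ := r^(α/2) * |u|^((q-2)/2) * |v| with hb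
  have hu : (0:ℝ) ≤ |u| := abs_nonneg u
  have ha2 : a^2 = r^(q+1) * |u|^q := by
    rw [ha, mul_pow, rpow_half_sq r _ hr.le, rpow_half_sq |u| _ hu]
  have hb2 : b^2 = r^α * |u|^(q-2) * v^2 := by
    rw [hb, mul_pow, mul_pow, rpow_half_sq r _ hr.le, rpow_half_sq |u| _ hu, sq_abs]
  have hrα : (0:ℝ) ≤ r ^ α := Real.rpow_nonneg hr.le α
  have huq2 : (0:ℝ) ≤ |u| ^ (q-2) := Real.rpow_nonneg hu _
  have hFab : a^2 + b^2 ≤ |F| := by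
    have : a^2 + b^2 ≤ F := by
      rw [ha2, hb2, hF]; nlinarith [mul_nonneg hrα (mul_nonneg huq2 (sq_nonneg w))]
    exact this.trans (le_abs_self F)
  have hLHS : |q * |u| ^ (q-2) * u * v| = q * r ^ (-((α+q+1)/2)) * (a * b) := by
    have h1 : |q * |u| ^ (q-2) * u * v| = q * (|u|^(q-2) * |u|) * |v| := by
      rw [abs_mul, abs_mul, abs_mul,
        abs_of_nonneg (by linarith : (0:ℝ) ≤ q), abs_of_nonneg huq2]
      ring
    have h2 : |u|^(q-2) * |u| = |u|^(q/2) * |u|^((q-2)/2) := by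
      have e1 : |u|^(q-2) * |u|^(1:ℝ) = |u|^(q-1) := by
        rw [← Real.rpow_add' hu (by intro h; nlinarith : q - 2 + 1 ≠ 0)]
        congr 1; ring
      have e2 : |u|^(q/2) * |u|^((q-2)/2) = |u|^(q-1) := by
        rw [← Real.rpow_add' hu (by intro h; nlinarith : q/2 + (q-2)/2 ≠ 0)]
        congr 1; ring
      rw [Real.rpow_one] at e1
      rw [e1, e2]
    have h3 : r ^ (-((α+q+1)/2)) * (r^((q+1)/2) * r^(α/2)) = 1 := by
      rw [← Real.rpow_add hr, ← Real.rpow_add hr, ← Real.rpow_zero r]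
      congr 1; ring
    rw [h1, h2, ha, hb]
    calc q * (|u|^(q/2) * |u|^((q-2)/2)) * |v|
        = q * ((r ^ (-((α+q+1)/2)) * (r^((q+1)/2) * r^(α/2))) *
            (|u|^(q/2) * |u|^((q-2)/2))) * |v| := by rw [h3]; ring
      _ = q * r ^ (-((α+q+1)/2)) *
            (r^((q+1)/2) * |u|^(q/2) * (r^(α/2) * |u|^((q-2)/2) * |v|)) := by ring
  rw [hLHS]
  have hab : a * b ≤ |F| / 2 := by nlinarith [sq_nonneg (a - b)]
  have hrβ : (0:ℝ) ≤ r ^ (-((α+q+1)/2)) := Real.rpow_nonneg hr.le _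
  nlinarith [mul_le_mul_of_nonneg_left hab (mul_nonneg (by linarith : (0:ℝ) ≤ q) hrβ)]

lemma slice_bound (r₁ q α : ℝ) (hq : 2 ≤ q) (f : ℝ × ℝ → ℝ)
    (hf : ContDiffOn ℝ (⊤ : ℕ∞) f (Set.Ioi r₁ ×ˢ (Set.univ : Set ℝ)))
    (r : ℝ) (hr : r₁ < r) (hr0 : 0 < r)
    (hint : Integrable (fun t => Fd f q α (r, t))) (z : ℝ) :
    |f (r, z)| ^ q ≤ (q/2) * r ^ (-((α+q+1)/2)) * ∫ t, |Fd f q α (r, t)| := by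
  have hq0 : (0:ℝ) < q := by linarith
  set g : ℝ → ℝ := fun t => f (r, t) with hgdef
  set g' : ℝ → ℝ := fun t => pdz f (r, t) with hg'def
  set D : ℝ → ℝ := fun t => q * |g t| ^ (q-2) * g t * g' t with hDdef
  set w : ℝ → ℝ := fun t => (g t ^ 2) ^ (q/2) with hwdef
  set C : ℝ := (q/2) * r ^ (-((α+q+1)/2)) with hCdef
  set I : ℝ := ∫ t, |Fd f q α (r, t)| with hIdef
  -- smoothness of the slice
  have hU : IsOpen (Set.Ioi r₁ ×ˢ (Set.univ : Set ℝ)) := isOpen_Ioi.prod isOpen_univ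
  have hg : ContDiff ℝ (⊤ : ℕ∞) g := by
    rw [contDiff_iff_contDiffAt]
    intro t
    have hmem : (r, t) ∈ Set.Ioi r₁ ×ˢ (Set.univ : Set ℝ) := ⟨hr, trivial⟩
    exact (hf.contDiffAt (hU.mem_nhds hmem)).comp t
      ((contDiff_const.prodMk contDiff_id).contDiffAt)
  have hgd : ∀ t, HasDerivAt g (g' t) t := by
    intro t
    have := (hg.differentiable (by simp) t).hasDerivAt
    exact this
  have hg'c : Continuous g' := by
    have : Continuous (deriv g) := hg.continuous_deriv (by simp)
    simpa [hg'def, pdz, hgdef] using this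
  -- derivative of w
  have hwD : ∀ t, HasDerivAt w (D t) t := by
    intro t
    have h1 : HasDerivAt (fun s => g s ^ 2) (2 * g t ^ 1 * g' t) t := (hgd t).pow 2
    have h2 : HasDerivAt (fun y : ℝ => y ^ (q/2)) (q/2 * (g t ^ 2) ^ (q/2 - 1)) (g t ^ 2) :=
      Real.hasDerivAt_rpow_const (Or.inr (by linarith))
    have h3 := h2.comp t h1
    refine HasDerivAt.congr_deriv h3 ?_
    have h4 : (g t ^ 2 : ℝ) ^ (q/2 - 1) = |g t| ^ (q - 2) := by
      rw [show q/2 - 1 = (q-2)/2 by ring, sq_rpow_half]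
    rw [hDdef]; simp only [h4]; ring
  -- pointwise bound on D
  have hDle : ∀ t, |D t| ≤ C * |Fd f q α (r, t)| := by
    intro t
    have := ptwise_bound q α r (g t) (g' t) (pdr f (r, t)) hq hr0
    simpa [hDdef, hCdef, Fd, hgdef, hg'def] using this
  -- continuity of D and w
  have hDc : Continuous D := by
    apply Continuous.mul
    apply Continuous.mul
    · exact continuous_const.mul
        ((Real.continuous_rpow_const (by linarith)).comp hg.continuous.abs)
    · exact hg.continuous
    · exact hg'c
  have hwc : Continuous w := by
    exact (Real.continuous_rpow_const (by positivity)).comp ((hg.continuous).pow 2)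
  -- w = |f|^q, and integrability of w
  have hw_eq : ∀ t, w t = |g t| ^ q := fun t => sq_rpow_half (g t) q
  have hw_nonneg : ∀ t, 0 ≤ w t := by
    intro t; rw [hw_eq t]; exact Real.rpow_nonneg (abs_nonneg _) q
  have hFd_nonneg : ∀ t, 0 ≤ Fd f q α (r, t) := by
    intro t
    have h1 : (0:ℝ) ≤ r ^ (q+1) := Real.rpow_nonneg hr0.le _
    have h2 : (0:ℝ) ≤ r ^ α := Real.rpow_nonneg hr0.le _
    have h3 : (0:ℝ) ≤ |f (r,t)| ^ q := Real.rpow_nonneg (abs_nonneg _) _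
    have h4 : (0:ℝ) ≤ |f (r,t)| ^ (q-2) := Real.rpow_nonneg (abs_nonneg _) _
    simp only [Fd]
    positivity
  have hw_le : ∀ t, w t ≤ r ^ (-(q+1)) * |Fd f q α (r, t)| := by
    intro t
    have h1 : r ^ (q+1) * w t ≤ Fd f q α (r, t) := by
      rw [hw_eq t]
      have h2 : (0:ℝ) ≤ r ^ α := Real.rpow_nonneg hr0.le _
      have h4 : (0:ℝ) ≤ |f (r,t)| ^ (q-2) := Real.rpow_nonneg (abs_nonneg _) _
      simp only [Fd, hgdef]
      nlinarith [mul_nonneg (mul_nonneg h2 h4)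
        (add_nonneg (sq_nonneg (pdr f (r,t))) (sq_nonneg (pdz f (r,t))))]
    have h5 : r ^ (-(q+1)) * (r ^ (q+1) * w t) ≤ r ^ (-(q+1)) * |Fd f q α (r, t)| := by
      apply mul_le_mul_of_nonneg_left _ (Real.rpow_nonneg hr0.le _)
      exact h1.trans (le_abs_self _)
    calc w t = r ^ (-(q+1)) * (r ^ (q+1) * w t) := by
          rw [← mul_assoc, ← Real.rpow_add hr0,
            show -(q+1) + (q+1) = 0 by ring, Real.rpow_zero, one_mul]
      _ ≤ _ := h5
  have hw_int : Integrable w := by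
    apply Integrable.mono' ((hint.abs).const_mul (r ^ (-(q+1))))
      hwc.aestronglyMeasurable
    filter_upwards with t
    rw [Real.norm_eq_abs, abs_of_nonneg (hw_nonneg t)]
    exact hw_le t
  -- existence of far points with small w
  have hsmall : ∀ ε > 0, ∃ z' > z, w z' < ε := by
    intro ε hε
    by_contra hcon
    push_neg at hcon
    have hconst : Integrable (fun _ : ℝ => ε) (volume.restrict (Set.Ioi z)) := by
      apply Integrable.mono' (hw_int.restrict (s := Set.Ioi z))
        aestronglyMeasurable_const
      rw [ae_restrict_iff' measurableSet_Ioi]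
      filter_upwards with t ht
      rw [Real.norm_eq_abs, abs_of_nonneg hε.le]
      exact hcon t ht
    rw [integrable_const_iff] at hconst
    rcases hconst with h | h
    · exact hε.ne' h
    · rw [isFiniteMeasure_restrict, Real.volume_Ioi] at h
      exact h rfl
  -- integral bound for D over intervals
  have hInonneg : 0 ≤ I := integral_nonneg (fun t => abs_nonneg _)
  have hCpos : 0 ≤ C := by
    rw [hCdef]
    exact mul_nonneg (by linarith) (Real.rpow_nonneg hr0.le _)
  have key : ∀ z' > z, w z ≤ w z' + C * I := by
    intro z' hz'
    have hftc : ∫ t in z..z', D t = w z' - w z :=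
      intervalIntegral.integral_eq_sub_of_hasDerivAt (fun t _ => hwD t)
        (hDc.intervalIntegrable z z')
    have habs : |∫ t in z..z', D t| ≤ C * I := by
      have h1 : |∫ t in z..z', D t| ≤ ∫ t in z..z', |D t| := by
        rw [← Real.norm_eq_abs]
        apply (intervalIntegral.norm_integral_le_integral_norm hz'.le).trans
        apply le_of_eq
        congr 1
      have h2 : ∫ t in z..z', |D t| ≤ ∫ t in z..z', C * |Fd f q α (r, t)| := by
        apply intervalIntegral.integral_mono_on hz'.le
          (hDc.abs.intervalIntegrable z z')
          ((hint.abs.const_mul C).intervalIntegrable)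
        intro t _
        exact hDle t
      have h3 : ∫ t in z..z', C * |Fd f q α (r, t)| ≤ C * I := by
        rw [intervalIntegral.integral_const_mul]
        apply mul_le_mul_of_nonneg_left _ hCpos
        rw [intervalIntegral.integral_of_le hz'.le]
        apply setIntegral_le_integral hint.abs
        filter_upwards with t using abs_nonneg _
      calc |∫ t in z..z', D t| ≤ ∫ t in z..z', |D t| := h1
        _ ≤ ∫ t in z..z', C * |Fd f q α (r, t)| := h2
        _ ≤ C * I := h3
    have : w z = w z' - ∫ t in z..z', D t := by rw [hftc]; ring
    rw [this]
    have := neg_abs_le (∫ t in z..z', D t)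
    linarith
  -- conclude
  have hfin : w z ≤ C * I := by
    apply le_of_forall_pos_le_add
    intro ε hε
    obtain ⟨z', hz', hwz'⟩ := hsmall ε hε
    have := key z' hz'
    linarith
  calc |f (r, z)| ^ q = w z := (hw_eq z).symm
    _ ≤ C * I := hfin

theorem decay_along_sequence (r₁ : ℝ) (hr₁ : 0 < r₁) (q α : ℝ) (hq : 2 ≤ q)
    (hα : α ≤ q + 3) (f : ℝ × ℝ → ℝ)
    (hf : ContDiffOn ℝ (⊤ : ℕ∞) f (Set.Ioi r₁ ×ˢ (Set.univ : Set ℝ)))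
    (hint1 : IntegrableOn
      (fun p : ℝ × ℝ => p.1 ^ α * |f p| ^ (q - 2) * ((pdr f p) ^ 2 + (pdz f p) ^ 2))
      (Set.Ioi r₁ ×ˢ (Set.univ : Set ℝ)))
    (hint2 : IntegrableOn (fun p : ℝ × ℝ => p.1 ^ (q + 1) * |f p| ^ q)
      (Set.Ioi r₁ ×ˢ (Set.univ : Set ℝ))) :
    ∃ rn : ℕ → ℝ, Tendsto rn atTop atTop ∧
      Tendsto (fun n => ENNReal.ofReal (rn n ^ ((α + q + 3) / (2 * q))) *
        ⨆ z : ℝ, (‖f (rn n, z)‖₊ : ENNReal)) atTop (nhds 0) := by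
  have hq0 : (0:ℝ) < q := by linarith
  -- Fubini setup
  have hFint : IntegrableOn (Fd f q α) (Set.Ioi r₁ ×ˢ (Set.univ : Set ℝ)) := by
    exact hint2.add hint1
  have hprod : Integrable (Fd f q α) ((volume.restrict (Set.Ioi r₁)).prod volume) := by
    rw [Measure.restrict_prod_eq_prod_univ, ← Measure.volume_eq_prod]
    exact hFint
  have hae : ∀ᵐ r ∂volume.restrict (Set.Ioi r₁),
      Integrable (fun z => Fd f q α (r, z)) volume := hprod.prod_right_ae
  set g : ℝ → ℝ := fun r => ∫ z, ‖Fd f q α (r, z)‖ with hgdef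
  have hg_int : Integrable g (volume.restrict (Set.Ioi r₁)) := hprod.integral_norm_prod_left
  have hg_nonneg : ∀ r, 0 ≤ g r := fun r => integral_nonneg fun z => norm_nonneg _
  -- tail integrals
  set A : ℕ → ℝ := fun n => r₁ + n + 1 with hAdef
  set B : ℕ → ℝ := fun n => r₁ + 2*n + 2 with hBdef
  have hn0 : ∀ n : ℕ, (0:ℝ) ≤ n := fun n => Nat.cast_nonneg n
  have hAB : ∀ n : ℕ, A n ≤ B n := by
    intro n; simp only [hAdef, hBdef]; have := hn0 n; linarith
  have hA_gt : ∀ n : ℕ, r₁ < A n := by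
    intro n; simp only [hAdef]; have := hn0 n; linarith
  have hsub : ∀ n : ℕ, Set.Ioc (A n) (B n) ⊆ Set.Ioi r₁ := by
    intro n r hrmem
    exact lt_trans (hA_gt n) hrmem.1
  set Tn : ℕ → ℝ := fun n => ∫ r in Set.Ioc (A n) (B n), g r with hTdef
  have hTn_nonneg : ∀ n, 0 ≤ Tn n := fun n =>
    setIntegral_nonneg measurableSet_Ioc fun r _ => hg_nonneg r
  -- Tn → 0 by dominated convergence
  have hTn0 : Tendsto Tn atTop (nhds 0) := by
    have heq : ∀ n, Tn n =
        ∫ r, (Set.Ioc (A n) (B n)).indicator g r ∂(volume.restrict (Set.Ioi r₁)) := by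
      intro n
      rw [integral_indicator measurableSet_Ioc, Measure.restrict_restrict measurableSet_Ioc,
        Set.inter_eq_left.mpr (hsub n)]
    apply Tendsto.congr (fun n => (heq n).symm)
    have h0 : (0:ℝ) = ∫ r, (0:ℝ) ∂(volume.restrict (Set.Ioi r₁)) := by simp
    rw [h0]
    apply tendsto_integral_of_dominated_convergence g
      (fun n => (hg_int.aestronglyMeasurable.indicator measurableSet_Ioc)) hg_int
    · intro n
      filter_upwards with r
      rw [Real.norm_eq_abs, abs_of_nonneg]
      · exact Set.indicator_le_self' (fun x _ => hg_nonneg x) r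
      · exact Set.indicator_nonneg (fun x _ => hg_nonneg x) r
    · filter_upwards with r
      obtain ⟨N, hN⟩ := exists_nat_ge (r - r₁ - 1)
      apply Tendsto.congr' _ tendsto_const_nhds
      filter_upwards [eventually_ge_atTop N] with n hn
      have : r ≤ A n := by
        simp only [hAdef]
        have : (N:ℝ) ≤ n := Nat.cast_le.mpr hn
        linarith
      exact (Set.indicator_of_notMem (fun hmem => absurd hmem.1 (not_lt.mpr this)) g).symm
  set c : ℕ → ℝ := fun n => (2/((n:ℝ)+1)) * (Tn n + 1/((n:ℝ)+1)) with hcdef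
  have hc_nonneg : ∀ n, 0 ≤ c n := by
    intro n; have h1 := hTn_nonneg n; have h2 := hn0 n
    apply mul_nonneg (by positivity) (by positivity)
  -- existence of good radii
  have claim : ∀ n : ℕ, ∃ r, r ∈ Set.Ioc (A n) (B n) ∧
      Integrable (fun z => Fd f q α (r, z)) volume ∧ g r ≤ c n := by
    intro n
    by_contra hcon
    push_neg at hcon
    have hae2 : ∀ᵐ r ∂volume.restrict (Set.Ioc (A n) (B n)),
        Integrable (fun z => Fd f q α (r, z)) volume :=
      ae_restrict_of_ae_restrict_of_subset (hsub n) hae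
    have hmem : ∀ᵐ r ∂volume.restrict (Set.Ioc (A n) (B n)),
        r ∈ Set.Ioc (A n) (B n) := ae_restrict_mem measurableSet_Ioc
    have hge : ∀ᵐ r ∂volume.restrict (Set.Ioc (A n) (B n)), c n ≤ g r := by
      filter_upwards [hae2, hmem] with r h1 h2
      exact (hcon r h2 h1).le
    have hvol : volume (Set.Ioc (A n) (B n)) = ENNReal.ofReal ((n:ℝ)+1) := by
      rw [Real.volume_Ioc]
      congr 1
      simp only [hAdef, hBdef]; push_cast; ring
    have hint_const : IntegrableOn (fun _ : ℝ => c n) (Set.Ioc (A n) (B n)) volume := by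
      refine integrableOn_const ?_
      rw [hvol]; exact ENNReal.ofReal_ne_top
    have hint_g : IntegrableOn g (Set.Ioc (A n) (B n)) volume := by
      exact IntegrableOn.mono_set hg_int (hsub n)
    have hTlow : c n * ((n:ℝ)+1) ≤ Tn n := by
      have := setIntegral_mono_ae_restrict hint_const hint_g hge
      rwa [setIntegral_const, measureReal_def, hvol, ENNReal.toReal_ofReal (by positivity), smul_eq_mul,
        mul_comm] at this
    have hceq : c n * ((n:ℝ)+1) = 2 * Tn n + 2/((n:ℝ)+1) := by
      have hne : ((n:ℝ)+1) ≠ 0 := by positivity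
      simp only [hcdef]
      field_simp
    have h1n : (0:ℝ) < 2/((n:ℝ)+1) := by positivity
    rw [hceq] at hTlow
    have := hTn_nonneg n
    linarith
  choose rn hmem hslice hgle using claim
  have hrn_gt : ∀ n, r₁ < rn n := fun n => hsub n (hmem n)
  have hrn_pos : ∀ n, 0 < rn n := fun n => lt_trans hr₁ (hrn_gt n)
  have hrn_lb : ∀ n : ℕ, (n:ℝ) ≤ rn n := by
    intro n
    have := (hmem n).1
    simp only [hAdef] at this
    linarith
  have hrn_ub : ∀ n : ℕ, rn n ≤ (r₁ + 2) * ((n:ℝ)+1) := by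
    intro n
    have := (hmem n).2
    simp only [hBdef] at this
    have h2 := hn0 n
    nlinarith
  have htend : Tendsto rn atTop atTop :=
    tendsto_atTop_mono hrn_lb tendsto_natCast_atTop_atTop
  -- the bound M
  set M : ℕ → ℝ := fun n => (q/2) * (rn n) ^ (-((α+q+1)/2)) * g (rn n) with hMdef
  have hM_nonneg : ∀ n, 0 ≤ M n := by
    intro n
    exact mul_nonneg (mul_nonneg (by linarith) (Real.rpow_nonneg (hrn_pos n).le _))
      (hg_nonneg _)
  have hsup : ∀ n, ∀ z : ℝ, |f (rn n, z)| ^ q ≤ M n := by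
    intro n z
    have := slice_bound r₁ q α hq f hf (rn n) (hrn_gt n) (hrn_pos n) (hslice n) z
    have hg_eq : g (rn n) = ∫ t, |Fd f q α (rn n, t)| := by
      simp only [hgdef, Real.norm_eq_abs]
    rw [hMdef]
    dsimp only
    rw [hg_eq]
    exact this
  have habs_le : ∀ n, ∀ z : ℝ, |f (rn n, z)| ≤ (M n) ^ (1/q) := by
    intro n z
    have h1 : (|f (rn n, z)| ^ q) ^ (1/q) = |f (rn n, z)| := by
      rw [← Real.rpow_mul (abs_nonneg _), mul_one_div, div_self hq0.ne', Real.rpow_one]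
    rw [← h1]
    exact Real.rpow_le_rpow (Real.rpow_nonneg (abs_nonneg _) q) (hsup n z) (by positivity)
  -- the real-valued majorant sequence
  set b : ℕ → ℝ := fun n => rn n ^ ((α + q + 3) / (2*q)) * (M n) ^ (1/q) with hbdef
  -- b n = ((q/2) * rn n * g (rn n)) ^ (1/q)
  have hb_eq : ∀ n, b n = ((q/2) * rn n * g (rn n)) ^ (1/q) := by
    intro n
    have hrpos := hrn_pos n
    have h1 : rn n ^ ((α + q + 3) / (2*q)) = (rn n ^ ((α + q + 3) / 2)) ^ (1/q) := by
      rw [← Real.rpow_mul hrpos.le]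
      congr 1
      field_simp
    have h2 : rn n ^ ((α + q + 3) / 2) * M n = (q/2) * rn n * g (rn n) := by
      rw [hMdef]
      dsimp only
      rw [show rn n ^ ((α + q + 3) / 2) * ((q/2) * rn n ^ (-((α+q+1)/2)) * g (rn n))
          = (q/2) * (rn n ^ ((α + q + 3) / 2) * rn n ^ (-((α+q+1)/2))) * g (rn n) by ring,
        ← Real.rpow_add hrpos, show (α + q + 3) / 2 + -((α+q+1)/2) = 1 by ring,
        Real.rpow_one]
    rw [hbdef]
    dsimp only
    rw [h1, ← Real.mul_rpow (Real.rpow_nonneg hrpos.le _) (hM_nonneg n), h2]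
  -- e n := (q/2) * rn n * g (rn n) tends to 0
  have he0 : Tendsto (fun n => (q/2) * rn n * g (rn n)) atTop (nhds 0) := by
    have hub : ∀ n : ℕ, (q/2) * rn n * g (rn n) ≤ q * (r₁+2) * (Tn n + 1/((n:ℝ)+1)) := by
      intro n
      have h1 : g (rn n) ≤ c n := hgle n
      have h2 : rn n ≤ (r₁ + 2) * ((n:ℝ)+1) := hrn_ub n
      have h3 : 0 ≤ g (rn n) := hg_nonneg _
      have h4 : 0 < rn n := hrn_pos n
      have h5 : (0:ℝ) < (n:ℝ)+1 := by positivity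
      have h6 : c n * ((n:ℝ)+1) = 2 * Tn n + 2/((n:ℝ)+1) := by
        have hne : ((n:ℝ)+1) ≠ 0 := by positivity
        simp only [hcdef]
        field_simp
      have h7 : (q/2) * rn n * g (rn n) ≤ (q/2) * ((r₁+2) * ((n:ℝ)+1)) * c n := by
        have := mul_le_mul h2 h1 h3 (by positivity : (0:ℝ) ≤ (r₁+2) * ((n:ℝ)+1))
        nlinarith
      calc (q/2) * rn n * g (rn n) ≤ (q/2) * ((r₁+2) * ((n:ℝ)+1)) * c n := h7
        _ = (q/2) * (r₁+2) * (c n * ((n:ℝ)+1)) := by ring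
        _ = (q/2) * (r₁+2) * (2 * Tn n + 2/((n:ℝ)+1)) := by rw [h6]
        _ = q * (r₁+2) * (Tn n + 1/((n:ℝ)+1)) := by ring
    have hlb : ∀ n : ℕ, 0 ≤ (q/2) * rn n * g (rn n) := by
      intro n
      exact mul_nonneg (mul_nonneg (by linarith) (hrn_pos n).le) (hg_nonneg _)
    have hub0 : Tendsto (fun n : ℕ => q * (r₁+2) * (Tn n + 1/((n:ℝ)+1))) atTop (nhds 0) := by
      have := (hTn0.add tendsto_one_div_add_atTop_nhds_zero_nat).const_mul (q * (r₁+2))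
      simpa using this
    exact tendsto_of_tendsto_of_tendsto_of_le_of_le tendsto_const_nhds hub0 hlb hub
  have hb0 : Tendsto b atTop (nhds 0) := by
    have := he0.rpow_const (p := 1/q) (Or.inr (by positivity))
    rw [Real.zero_rpow (by positivity : (1:ℝ)/q ≠ 0)] at this
    exact Tendsto.congr (fun n => (hb_eq n).symm) this
  -- assemble
  refine ⟨rn, htend, ?_⟩
  have hupper : ∀ n, ENNReal.ofReal (rn n ^ ((α + q + 3) / (2 * q))) *
      (⨆ z : ℝ, (‖f (rn n, z)‖₊ : ENNReal)) ≤ ENNReal.ofReal (b n) := by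
    intro n
    have hsupz : (⨆ z : ℝ, (‖f (rn n, z)‖₊ : ENNReal)) ≤ ENNReal.ofReal ((M n) ^ (1/q)) := by
      apply iSup_le
      intro z
      rw [← enorm_eq_nnnorm, ← ofReal_norm, Real.norm_eq_abs]
      exact ENNReal.ofReal_le_ofReal (habs_le n z)
    calc ENNReal.ofReal (rn n ^ ((α + q + 3) / (2 * q))) *
          (⨆ z : ℝ, (‖f (rn n, z)‖₊ : ENNReal))
        ≤ ENNReal.ofReal (rn n ^ ((α + q + 3) / (2 * q))) *
          ENNReal.ofReal ((M n) ^ (1/q)) := mul_le_mul_right hsupz _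
      _ = ENNReal.ofReal (b n) := by
          rw [← ENNReal.ofReal_mul (Real.rpow_nonneg (hrn_pos n).le _)]
  have hofb : Tendsto (fun n => ENNReal.ofReal (b n)) atTop (nhds 0) := by
    have := ENNReal.tendsto_ofReal hb0
    simpa using this
  exact tendsto_of_tendsto_of_tendsto_of_le_of_le tendsto_const_nhds hofb
    (fun n => zero_le) hupper
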